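/- Let $d \geq 2$, $\alpha \in (0,1)$, $s \in (1-\alpha, 1)$, and fix $\xi \in \mathbb{R}^d$ with $|\xi| > 1$. Set $D_2 = \{\eta \in \mathbb{R}^d : |\eta - \xi| > |\xi|/2, \ |\eta| \leq |\xi|/2\}$. Then there is a constant $C$ (depending on $d,\alpha,s$ only) such that $\int_{D_2} \frac{|\xi|^2}{(1+|\xi-\eta|^2)^{d/2+\alpha}|\eta|^{2s}} d\eta + \int_{D_2} \frac{|\xi|^{2-2s}}{(1+|\xi-\eta|^2)^{d/2+\alpha}} d\eta \leq C$. -/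

import Mathlib

open MeasureTheory ENNReal Metric Module

/-! On the region, `‖ξ - η‖ > ‖ξ‖ / 2` gives `(1 + ‖ξ - η‖²)^(-e) ≤ (‖ξ‖ / 2)^(-2e)` with
`e = d / 2 + α`, and `‖η‖ ≤ ‖ξ‖ / 2` puts the region inside the ball of radius `‖ξ‖`. Both
integrands are therefore bounded by `c(ξ) ‖η‖^(-p)`, with `p = 2s` and `p = 0` respectively.
Scaling gives `∫_{B(0,R)} ‖η‖^(-p) = R^(d-p) ∫_{B(0,1)} ‖η‖^(-p)`, finite since `p < d`, so each
integral is a fixed multiple of `‖ξ‖^(2 - 2α - 2s) ≤ 1`. -/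

theorem one_add_sq_rpow_neg_le {a b e : ℝ} (ha : 0 < a) (hab : a ≤ b) (he : 0 ≤ e) :
    (1 + b ^ 2) ^ (-e) ≤ a ^ (-(2 * e)) :=
  calc (1 + b ^ 2) ^ (-e) ≤ (a ^ 2) ^ (-e) :=
        Real.rpow_le_rpow_of_nonpos (by positivity) (by nlinarith) (neg_nonpos.2 he)
    _ = a ^ (-(2 * e)) := by
        rw [← Real.rpow_natCast, ← Real.rpow_mul ha.le]; push_cast; ring_nf

theorem rpow_mul_half_rpow_mul_rpow_le {x a b e : ℝ} (hx : 1 ≤ x) (h : a + b ≤ 2 * e) :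
    x ^ a * (x / 2) ^ (-(2 * e)) * x ^ b ≤ 2 ^ (2 * e) := by
  have hx0 : 0 < x := by linarith
  calc x ^ a * (x / 2) ^ (-(2 * e)) * x ^ b = x ^ (a + -(2 * e) + b) * 2 ^ (2 * e) := by
        rw [Real.div_rpow hx0.le zero_le_two, div_eq_mul_inv, ← Real.rpow_neg zero_le_two, neg_neg,
          Real.rpow_add hx0, Real.rpow_add hx0]
        ring
    _ ≤ 1 * 2 ^ (2 * e) := by
        gcongr
        exact Real.rpow_le_one_of_one_le_of_nonpos hx (by linarith)
    _ = 2 ^ (2 * e) := one_mul _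

section AddHaar

variable {E : Type*} [NormedAddCommGroup E] [NormedSpace ℝ E] [FiniteDimensional ℝ E]
  [MeasurableSpace E] [BorelSpace E] (μ : Measure E) [μ.IsAddHaarMeasure]

theorem lintegral_comp_smul_addHaar (f : E → ℝ≥0∞) {r : ℝ} (hr : r ≠ 0) :
    ∫⁻ x, f (r • x) ∂μ = ENNReal.ofReal |(r ^ finrank ℝ E)⁻¹| * ∫⁻ x, f x ∂μ :=
  calc ∫⁻ x, f (r • x) ∂μ = ∫⁻ y, f y ∂Measure.map (r • ·) μ :=
        (lintegral_map_equiv f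
          (Homeomorph.smul (isUnit_iff_ne_zero.2 hr).unit).toMeasurableEquiv).symm
    _ = _ := by rw [Measure.map_addHaar_smul μ hr, lintegral_smul_measure, smul_eq_mul]

theorem setLIntegral_ball_norm_rpow_neg (p : ℝ) {R : ℝ} (hR : 0 < R) :
    ∫⁻ x in ball 0 R, ENNReal.ofReal (‖x‖ ^ (-p)) ∂μ =
      ENNReal.ofReal (R ^ (finrank ℝ E - p)) *
        ∫⁻ x in ball 0 1, ENNReal.ofReal (‖x‖ ^ (-p)) ∂μ := by
  set F : E → ℝ≥0∞ := fun x => ENNReal.ofReal (‖x‖ ^ (-p))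
  have hscale (x : E) :
      (ball 0 R).indicator F (R • x) = ENNReal.ofReal (R ^ (-p)) * (ball 0 1).indicator F x := by
    have hmem : R • x ∈ ball (0 : E) R ↔ x ∈ ball (0 : E) 1 := by
      simp [norm_smul, abs_of_pos hR, hR]
    by_cases hx : x ∈ ball (0 : E) 1
    · rw [Set.indicator_of_mem (hmem.2 hx), Set.indicator_of_mem hx, ← ENNReal.ofReal_mul
        (by positivity)]
      simp only [F, norm_smul, Real.norm_of_nonneg hR.le, Real.mul_rpow hR.le (norm_nonneg x)]
    · rw [Set.indicator_of_notMem (mt hmem.1 hx), Set.indicator_of_notMem hx, mul_zero]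
  have key := lintegral_comp_smul_addHaar μ ((ball 0 R).indicator F) hR.ne'
  simp only [hscale] at key
  rw [lintegral_const_mul' _ _ ofReal_ne_top, lintegral_indicator measurableSet_ball,
    lintegral_indicator measurableSet_ball] at key
  have hRd : 0 < R ^ finrank ℝ E := by positivity
  calc ∫⁻ x in ball 0 R, F x ∂μ
      = ENNReal.ofReal (R ^ finrank ℝ E * |(R ^ finrank ℝ E)⁻¹|) * ∫⁻ x in ball 0 R, F x ∂μ := by
        rw [abs_of_pos (inv_pos.2 hRd), mul_inv_cancel₀ hRd.ne', ENNReal.ofReal_one, one_mul]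
    _ = ENNReal.ofReal (R ^ finrank ℝ E) *
          (ENNReal.ofReal (R ^ (-p)) * ∫⁻ x in ball 0 1, F x ∂μ) := by
        rw [ENNReal.ofReal_mul hRd.le, mul_assoc, key]
    _ = _ := by
        rw [← mul_assoc, ← ENNReal.ofReal_mul hRd.le, ← Real.rpow_natCast, ← Real.rpow_add hR,
          sub_eq_add_neg]

theorem setLIntegral_unitBall_norm_rpow_neg_lt_top (hE : 1 ≤ finrank ℝ E) {p : ℝ}
    (hp : p < finrank ℝ E) :
    ∫⁻ x in ball 0 1, ENNReal.ofReal (‖x‖ ^ (-p)) ∂μ < ∞ := by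
  refine IntegrableOn.setLIntegral_lt_top (integrableOn_ball_of_norm_le_rpow hE (C := 1) hp ?_ ?_)
  · refine ae_of_all _ fun x => ?_
    rw [one_mul, Real.norm_of_nonneg (by positivity)]
  · exact (measurable_norm.pow_const _).aestronglyMeasurable

theorem setLIntegral_le_of_le_mul_norm_rpow_neg {S : Set E} {f : E → ℝ} {R c p : ℝ}
    (hR : 0 < R) (hS : S ⊆ ball 0 R) (hc : 0 ≤ c) (hf : ∀ x ∈ S, f x ≤ c * ‖x‖ ^ (-p)) :
    ∫⁻ x in S, ENNReal.ofReal (f x) ∂μ ≤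
      ENNReal.ofReal (c * R ^ (finrank ℝ E - p)) *
        ∫⁻ x in ball 0 1, ENNReal.ofReal (‖x‖ ^ (-p)) ∂μ :=
  calc ∫⁻ x in S, ENNReal.ofReal (f x) ∂μ
      ≤ ∫⁻ x in S, ENNReal.ofReal c * ENNReal.ofReal (‖x‖ ^ (-p)) ∂μ :=
        setLIntegral_mono (by fun_prop) fun x hx => by
          rw [← ENNReal.ofReal_mul hc]; exact ENNReal.ofReal_le_ofReal (hf x hx)
    _ ≤ ∫⁻ x in ball 0 R, ENNReal.ofReal c * ENNReal.ofReal (‖x‖ ^ (-p)) ∂μ :=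
        lintegral_mono_set hS
    _ = _ := by
        rw [lintegral_const_mul' _ _ ofReal_ne_top, setLIntegral_ball_norm_rpow_neg μ p hR,
          ← mul_assoc, ← ENNReal.ofReal_mul hc]

theorem setLIntegral_far_region_le {ξ : E} (hξ : 1 ≤ ‖ξ‖) {e s : ℝ} (he : 0 ≤ e)
    (hes : finrank ℝ E + 2 - 2 * s ≤ 2 * e) :
    (∫⁻ η in {η : E | ‖η - ξ‖ > ‖ξ‖ / 2 ∧ ‖η‖ ≤ ‖ξ‖ / 2},
        ENNReal.ofReal (‖ξ‖ ^ 2 / ((1 + ‖ξ - η‖ ^ 2) ^ e * ‖η‖ ^ (2 * s))) ∂μ) +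
      ∫⁻ η in {η : E | ‖η - ξ‖ > ‖ξ‖ / 2 ∧ ‖η‖ ≤ ‖ξ‖ / 2},
        ENNReal.ofReal (‖ξ‖ ^ (2 - 2 * s) / (1 + ‖ξ - η‖ ^ 2) ^ e) ∂μ ≤
      ENNReal.ofReal (2 ^ (2 * e)) *
        ((∫⁻ x in ball 0 1, ENNReal.ofReal (‖x‖ ^ (-(2 * s))) ∂μ) + μ (ball 0 1)) := by
  set S := {η : E | ‖η - ξ‖ > ‖ξ‖ / 2 ∧ ‖η‖ ≤ ‖ξ‖ / 2}
  have hξ₀ : 0 < ‖ξ‖ := by linarith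
  have hS : S ⊆ ball 0 ‖ξ‖ := fun η hη => mem_ball_zero_iff.2 (by linarith [hη.2])
  have hdecay : ∀ η ∈ S, (1 + ‖ξ - η‖ ^ 2) ^ (-e) ≤ (‖ξ‖ / 2) ^ (-(2 * e)) := fun η hη =>
    one_add_sq_rpow_neg_le (by positivity) (by rw [norm_sub_rev]; exact hη.1.le) he
  have h₁ : ∀ η ∈ S, ‖ξ‖ ^ 2 / ((1 + ‖ξ - η‖ ^ 2) ^ e * ‖η‖ ^ (2 * s)) ≤
      ‖ξ‖ ^ (2 : ℝ) * (‖ξ‖ / 2) ^ (-(2 * e)) * ‖η‖ ^ (-(2 * s)) := fun η hη => by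
    rw [div_eq_mul_inv, mul_inv, ← Real.rpow_neg (by positivity), ← Real.rpow_neg (by positivity),
      ← mul_assoc, Real.rpow_two]
    gcongr
    exact hdecay η hη
  have h₂ : ∀ η ∈ S, ‖ξ‖ ^ (2 - 2 * s) / (1 + ‖ξ - η‖ ^ 2) ^ e ≤
      ‖ξ‖ ^ (2 - 2 * s) * (‖ξ‖ / 2) ^ (-(2 * e)) * ‖η‖ ^ (-0 : ℝ) := fun η hη => by
    rw [neg_zero, Real.rpow_zero, mul_one, div_eq_mul_inv, ← Real.rpow_neg (by positivity)]
    gcongr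
    exact hdecay η hη
  have hI₁ := setLIntegral_le_of_le_mul_norm_rpow_neg μ hξ₀ hS (by positivity) h₁
  have hI₂ := setLIntegral_le_of_le_mul_norm_rpow_neg μ hξ₀ hS (by positivity) h₂
  simp only [neg_zero, Real.rpow_zero, ENNReal.ofReal_one, setLIntegral_one, sub_zero] at hI₂
  have hc₁ := rpow_mul_half_rpow_mul_rpow_le hξ (a := 2) (b := finrank ℝ E - 2 * s) (e := e)
    (by linarith)
  have hc₂ := rpow_mul_half_rpow_mul_rpow_le hξ (a := 2 - 2 * s) (b := finrank ℝ E) (e := e)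
    (by linarith)
  calc _ ≤ _ := add_le_add hI₁ hI₂
    _ ≤ _ := by
        rw [mul_add]
        gcongr

end AddHaar

theorem stmt8_general (d : ℕ) (hd : 2 ≤ d) (α s : ℝ)
    (hs : s ∈ Set.Ioo (1 - α) 1) :
    ∃ C : ℝ, 0 < C ∧
      ∀ ξ : EuclideanSpace ℝ (Fin d), 1 < ‖ξ‖ →
        (∫⁻ η in {η : EuclideanSpace ℝ (Fin d) | ‖η - ξ‖ > ‖ξ‖ / 2 ∧ ‖η‖ ≤ ‖ξ‖ / 2},
            ENNReal.ofReal (‖ξ‖ ^ 2 /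
              ((1 + ‖ξ - η‖ ^ 2) ^ ((d : ℝ) / 2 + α) * ‖η‖ ^ (2 * s)))) +
        (∫⁻ η in {η : EuclideanSpace ℝ (Fin d) | ‖η - ξ‖ > ‖ξ‖ / 2 ∧ ‖η‖ ≤ ‖ξ‖ / 2},
            ENNReal.ofReal (‖ξ‖ ^ (2 - 2 * s) /
              (1 + ‖ξ - η‖ ^ 2) ^ ((d : ℝ) / 2 + α))) ≤
        ENNReal.ofReal C := by
  obtain ⟨hs₀, hs₁⟩ := hs
  have hdim : finrank ℝ (EuclideanSpace ℝ (Fin d)) = d := finrank_euclideanSpace_fin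
  have hdR : (2 : ℝ) ≤ d := by exact_mod_cast hd
  set B : ℝ≥0∞ := ENNReal.ofReal (2 ^ (2 * ((d : ℝ) / 2 + α))) *
    ((∫⁻ x in ball (0 : EuclideanSpace ℝ (Fin d)) 1, ENNReal.ofReal (‖x‖ ^ (-(2 * s)))) +
      volume (ball (0 : EuclideanSpace ℝ (Fin d)) 1))
  have hB : B ≠ ∞ := mul_ne_top ofReal_ne_top <| add_ne_top.2
    ⟨(setLIntegral_unitBall_norm_rpow_neg_lt_top volume (by omega) (by rw [hdim]; linarith)).ne,
      measure_ball_lt_top.ne⟩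
  refine ⟨B.toReal + 1, by positivity, fun ξ hξ => ?_⟩
  calc _ ≤ B := setLIntegral_far_region_le volume hξ.le (by linarith) (by rw [hdim]; linarith)
    _ ≤ ENNReal.ofReal (B.toReal + 1) := by
        rw [← ENNReal.ofReal_toReal hB]
        exact ENNReal.ofReal_le_ofReal (by simp)

theorem stmt8 (d : ℕ) (hd : 2 ≤ d) (α s : ℝ) (hα : α ∈ Set.Ioo (0 : ℝ) 1)
    (hs : s ∈ Set.Ioo (1 - α) 1) :
    ∃ C : ℝ, 0 < C ∧
      ∀ ξ : EuclideanSpace ℝ (Fin d), 1 < ‖ξ‖ →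
        (∫⁻ η in {η : EuclideanSpace ℝ (Fin d) | ‖η - ξ‖ > ‖ξ‖ / 2 ∧ ‖η‖ ≤ ‖ξ‖ / 2},
            ENNReal.ofReal (‖ξ‖ ^ 2 /
              ((1 + ‖ξ - η‖ ^ 2) ^ ((d : ℝ) / 2 + α) * ‖η‖ ^ (2 * s)))) +
        (∫⁻ η in {η : EuclideanSpace ℝ (Fin d) | ‖η - ξ‖ > ‖ξ‖ / 2 ∧ ‖η‖ ≤ ‖ξ‖ / 2},
            ENNReal.ofReal (‖ξ‖ ^ (2 - 2 * s) /
              (1 + ‖ξ - η‖ ^ 2) ^ ((d : ℝ) / 2 + α))) ≤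
        ENNReal.ofReal C :=
  stmt8_general d hd α s hs
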